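/- arXiv:0902.1975 — 7 statements merged into one kernel-verified Lean document; each statement's English description precedes it below -/
import Mathlib

section
/- The matrices A = [[1,2],[0,1]] and B = [[1,0],[2,1]] generate a free subgroup of rank 2 in SL(2,ℤ); equivalently, the homomorphism from the free group on {a,b} to SL(2,ℤ) sending a ↦ A and b ↦ B is injective. -/
/-- The matrix `A = [[1,2],[0,1]]` as an element of `SL(2,ℤ)`. -/
def matA : Matrix.SpecialLinearGroup (Fin 2) ℤ :=
  ⟨!![1, 2; 0, 1], by simp [Matrix.det_fin_two_of]⟩

/-- The matrix `B = [[1,0],[2,1]]` as an element of `SL(2,ℤ)`. -/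
def matB : Matrix.SpecialLinearGroup (Fin 2) ℤ :=
  ⟨!![1, 0; 2, 1], by simp [Matrix.det_fin_two_of]⟩

/-!
`A` and `B` are the elementary transvections `v₀ ↦ v₀ + 2v₁` and `v₁ ↦ v₁ + 2v₀` of `ℤ²`. A
nonzero power `Aⁿ` adds `2n · v₁` to `v₀`, and since `|2n| ≥ 2` it maps the vectors with
`|v₀| < |v₁|` into those with `|v₁| < |v₀|`; symmetrically for `Bⁿ`. The ping-pong lemma for the
free product of the infinite cyclic groups `⟨A⟩` and `⟨B⟩` then shows that no nontrivial reduced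
word is sent to the identity.
-/

open Function Pointwise Matrix.SpecialLinearGroup

theorem FreeGroup.injective_lift_of_ping_pong_zpow {ι G α : Type*} [Nontrivial ι] [Group G]
    [MulAction G α] (a : ι → G) (X : ι → Set α) (hX : ∀ i, (X i).Nonempty)
    (hXdisj : Pairwise (Disjoint on X))
    (hpp : Pairwise fun i j => ∀ n : ℤ, n ≠ 0 → a i ^ n • X j ⊆ X i) :
    Injective (FreeGroup.lift a) := by
  have hlift : FreeGroup.lift a = (Monoid.CoprodI.lift fun i => FreeGroup.lift fun _ => a i).comp
      freeGroupEquivCoprodI.toMonoidHom := by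
    ext; simp
  rw [hlift, MonoidHom.coe_comp]
  refine Injective.comp ?_ freeGroupEquivCoprodI.injective
  refine Monoid.CoprodI.lift_injective_of_ping_pong _ ?_ X hX hXdisj ?_
  · refine .inr ⟨Classical.arbitrary ι, ?_⟩
    rw [FreeGroup.freeGroupUnitEquivInt.cardinal_eq, Cardinal.mk_int]
    exact Cardinal.natCast_lt_aleph0.le
  · intro i j hij h hh
    obtain ⟨n, rfl⟩ := FreeGroup.freeGroupUnitEquivInt.symm.surjective h
    have hn : n ≠ 0 := by rintro rfl; exact hh (by simp [FreeGroup.freeGroupUnitEquivInt])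
    simpa [FreeGroup.freeGroupUnitEquivInt] using hpp hij n hn

theorem abs_lt_abs_add_mul {F : Type*} [CommRing F] [LinearOrder F] [IsStrictOrderedRing F]
    {x y c : F} (hc : 2 ≤ |c|) (h : |x| < |y|) : |y| < |x + c * y| :=
  calc |y| < 2 * |y| - |x| := by linarith
    _ ≤ |c| * |y| - |x| := by gcongr
    _ ≤ |x + c * y| := by linarith [abs_mul c y ▸ abs_add' (c * y) x]

namespace Matrix.SpecialLinearGroup

variable {ι F : Type*} [DecidableEq ι] [Fintype ι] [CommRing F]

theorem transvection_zsmul {i j : ι} (hij : i ≠ j) (b : F) (n : ℤ) :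
    transvection hij (n • b) = transvection hij b ^ n := by
  induction n using Int.induction_on with
  | zero => simp
  | succ k ih => rw [add_smul, one_smul, transvection_add, ih, ← _root_.zpow_add_one]
  | pred k ih =>
    rw [sub_smul, one_smul, sub_eq_add_neg, transvection_add, ih, ← transvection_inv,
      ← _root_.zpow_sub_one]

theorem transvection_smul {i j : ι} (hij : i ≠ j) (b : F) (v : ι → F) :
    transvection hij b • v = v + Pi.single i (b * v j) := by
  simp [SpecialLinearGroup.smul_def, transvection_coe, add_mulVec, single_mulVec, Pi.single]

theorem transvection_smul_subset [LinearOrder F] [IsStrictOrderedRing F] {i j : ι} (hij : i ≠ j)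
    {c : F} (hc : 2 ≤ |c|) :
    transvection hij c • {v : ι → F | |v i| < |v j|} ⊆ {v | |v j| < |v i|} := by
  rintro _ ⟨v, hv, rfl⟩
  simpa [transvection_smul, hij.symm] using abs_lt_abs_add_mul hc hv

theorem transvection_zpow_smul_subset [LinearOrder F] [IsStrictOrderedRing F] {i j : ι}
    (hij : i ≠ j) {c : F} (hc : 2 ≤ |c|) {n : ℤ} (hn : n ≠ 0) :
    transvection hij c ^ n • {v : ι → F | |v i| < |v j|} ⊆ {v | |v j| < |v i|} := by
  refine transvection_zsmul hij c n ▸ transvection_smul_subset hij (hc.trans ?_)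
  rw [zsmul_eq_mul, abs_mul, ← Int.cast_abs]
  exact le_mul_of_one_le_left (abs_nonneg c) (by exact_mod_cast Int.one_le_abs hn)

end Matrix.SpecialLinearGroup

theorem matA_eq_transvection : matA = transvection (zero_ne_one' (Fin 2)) 2 := by
  ext i j; fin_cases i <;> fin_cases j <;> rfl

theorem matB_eq_transvection : matB = transvection (one_ne_zero' (Fin 2)) 2 := by
  ext i j; fin_cases i <;> fin_cases j <;> rfl

/-- The matrices `A = [[1,2],[0,1]]` and `B = [[1,0],[2,1]]` generate a free subgroup of
rank 2 in `SL(2,ℤ)`: the homomorphism from the free group on two generators `{a,b}`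
(modelled as `FreeGroup Bool`) sending `a ↦ A` and `b ↦ B` is injective. -/
theorem matrices_generate_free_group :
    Function.Injective
      ((FreeGroup.lift fun x : Bool => if x then matA else matB) :
        FreeGroup Bool →* Matrix.SpecialLinearGroup (Fin 2) ℤ) := by
  let X : Bool → Set (Fin 2 → ℤ) := fun b => cond b {v | |v 1| < |v 0|} {v | |v 0| < |v 1|}
  refine FreeGroup.injective_lift_of_ping_pong_zpow _ X ?_ ?_ ?_
  · rintro (_ | _)
    exacts [⟨Pi.single 1 1, by simp [X]⟩, ⟨Pi.single 0 1, by simp [X]⟩]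
  · exact pairwise_disjoint_on_bool.2 (Set.disjoint_left.2 fun v (h : |v 1| < |v 0|) => h.not_gt)
  · rintro (_ | _) (_ | _) hij n hn <;> simp only [ne_eq, not_true_eq_false] at hij
    · simpa [X, matB_eq_transvection] using transvection_zpow_smul_subset _ (by simp) hn
    · simpa [X, matA_eq_transvection] using transvection_zpow_smul_subset _ (by simp) hn
end

section
/- Let S be the subsemigroup of a group G generated by a finite set X. The identity element 1 belongs to S if and only if some nonempty subset Y of X generates a subsemigroup of G that is a group. -/
/-- A subsemigroup `T` of a group `G` is a group if it contains a (two-sided) identity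
element and every element of `T` has a (two-sided) inverse inside `T`. -/
def IsGroupSubsemigroup {G : Type*} [Group G] (T : Subsemigroup G) : Prop :=
  ∃ e ∈ T, (∀ s ∈ T, e * s = s ∧ s * e = s) ∧ ∀ s ∈ T, ∃ t ∈ T, s * t = e ∧ t * s = e

private theorem aux_list_prod_mem {G : Type*} [Group G] (T : Subsemigroup G) :
    ∀ (l : List G), l ≠ [] → (∀ y ∈ l, y ∈ T) → l.prod ∈ T := by
  intro l
  induction l with
  | nil => simp
  | cons a t ih =>
    intro _ h
    rcases eq_or_ne t [] with rfl | ht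
    · simpa using h a (by simp)
    · rw [List.prod_cons]
      exact mul_mem (h a (by simp)) (ih ht fun y hy => h y (List.mem_cons_of_mem _ hy))

private theorem aux_exists_list {G : Type*} [Group G] {s : Set G} {x : G}
    (hx : x ∈ Subsemigroup.closure s) :
    ∃ l : List G, l ≠ [] ∧ (∀ y ∈ l, y ∈ s) ∧ l.prod = x := by
  induction hx using Subsemigroup.closure_induction with
  | mem y hy => exact ⟨[y], by simp, by simpa using hy, by simp⟩
  | mul a b _ _ ha hb =>
    obtain ⟨l1, h1, m1, p1⟩ := ha
    obtain ⟨l2, h2, m2, p2⟩ := hb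
    exact ⟨l1 ++ l2, by simp [h1], by
      intro y hy; rcases List.mem_append.1 hy with h | h
      exacts [m1 y h, m2 y h], by rw [List.prod_append, p1, p2]⟩

/-- Let `S` be the subsemigroup of a group `G` generated by a finite set `X`.
The identity element `1` belongs to `S` if and only if some nonempty subset `Y ⊆ X`
generates a subsemigroup of `G` that is a group. -/
theorem one_mem_closure_iff_subset_generates_group {G : Type*} [Group G] (X : Finset G) :
    (1 : G) ∈ Subsemigroup.closure (X : Set G) ↔
      ∃ Y : Finset G, Y ⊆ X ∧ Y.Nonempty ∧
        IsGroupSubsemigroup (Subsemigroup.closure (Y : Set G)) := by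
  constructor
  · intro h1
    classical
    obtain ⟨l, hl, hmem, hprod⟩ := aux_exists_list h1
    refine ⟨l.toFinset, ?_, ?_, ?_⟩
    · intro y hy
      exact hmem y (List.mem_toFinset.1 hy)
    · exact (List.toFinset_nonempty_iff l).2 hl
    · have h1Y : (1 : G) ∈ Subsemigroup.closure (l.toFinset : Set G) := by
        rw [← hprod]
        exact aux_list_prod_mem _ l hl fun y hy => Subsemigroup.subset_closure (by simpa using hy)
      have hinv_gen : ∀ y ∈ l, y⁻¹ ∈ Subsemigroup.closure (l.toFinset : Set G) := by
        intro y hy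
        obtain ⟨a, b, rfl⟩ := List.append_of_mem hy
        rw [List.prod_append, List.prod_cons] at hprod
        have h2 : a.prod * y * b.prod = 1 := by rw [mul_assoc]; exact hprod
        have hy' : y⁻¹ = (b ++ a).prod := by
          rw [List.prod_append]
          have h3 : y = a.prod⁻¹ * b.prod⁻¹ := by
            have := congrArg (fun g => a.prod⁻¹ * g * b.prod⁻¹) h2
            simpa [mul_assoc] using this
          rw [h3]
          group
        rcases eq_or_ne (b ++ a) [] with he | he
        · have : a = [] ∧ b = [] := by
            constructor <;> [exact (List.append_eq_nil_iff.1 he).2; exact (List.append_eq_nil_iff.1 he).1]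
          obtain ⟨rfl, rfl⟩ := this
          simp at hprod
          rw [hy', he]
          simpa [hprod] using h1Y
        · rw [hy']
          refine aux_list_prod_mem _ _ he fun z hz => Subsemigroup.subset_closure ?_
          simp only [List.mem_append] at hz
          simp only [List.coe_toFinset, Set.mem_setOf_eq]
          rcases hz with h | h
          · exact List.mem_append.2 (Or.inr (List.mem_cons_of_mem _ h))
          · exact List.mem_append.2 (Or.inl h)
      have hinv : ∀ s ∈ Subsemigroup.closure (l.toFinset : Set G),
          s⁻¹ ∈ Subsemigroup.closure (l.toFinset : Set G) := by
        intro s hs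
        induction hs using Subsemigroup.closure_induction with
        | mem y hy => exact hinv_gen y (by simpa using hy)
        | mul a b ha hb iha ihb =>
          rw [mul_inv_rev]
          exact mul_mem ihb iha
      exact ⟨1, h1Y, fun s _ => ⟨one_mul s, mul_one s⟩,
        fun s hs => ⟨s⁻¹, hinv s hs, mul_inv_cancel s, inv_mul_cancel s⟩⟩
  · rintro ⟨Y, hYX, -, e, heT, hid, -⟩
    have he1 : e = 1 := by
      have := (hid e heT).1
      simpa using this
    rw [← he1]
    exact Subsemigroup.closure_mono (by exact_mod_cast hYX) heT
end

section
/- Let X be a finite subset of a group G whose elements admit a nonempty product equal to 1, and let Y be the set of all elements of X appearing in such a product. Then the subsemigroup of G generated by Y is a group. -/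
theorem Subsemigroup.list_prod_mem {M : Type*} [Monoid M] (S : Subsemigroup M) {l : List M}
    (hl : l ≠ []) (hS : ∀ x ∈ l, x ∈ S) : l.prod ∈ S := by
  induction l with
  | nil => exact absurd rfl hl
  | cons a t ih =>
    rcases eq_or_ne t [] with rfl | ht
    · simpa using hS a List.mem_cons_self
    · rw [List.prod_cons]
      exact S.mul_mem (hS a List.mem_cons_self)
        (ih ht fun x hx => hS x (List.mem_cons_of_mem a hx))

section Group

variable {G : Type*} [Group G]

theorem inv_eq_prod_of_prod_append_cons_eq_one {s t : List G} {y : G}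
    (h : (s ++ y :: t).prod = 1) : y⁻¹ = (t ++ s).prod := by
  rw [List.prod_append, List.prod_cons] at h
  rw [List.prod_append, inv_eq_iff_mul_eq_one, ← mul_assoc]
  exact mul_eq_one_comm.mp h

theorem Subsemigroup.inv_mem_of_mem_of_prod_eq_one (S : Subsemigroup G) {l : List G}
    (hS : ∀ x ∈ l, x ∈ S) (h : l.prod = 1) {y : G} (hy : y ∈ l) : y⁻¹ ∈ S := by
  obtain ⟨s, t, rfl⟩ := List.append_of_mem hy
  rw [inv_eq_prod_of_prod_append_cons_eq_one h, ← mul_one (t ++ s).prod, ← h,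
    ← List.prod_append]
  refine S.list_prod_mem (by simp) fun x hx => hS x ?_
  simp only [List.mem_append, List.mem_cons] at hx ⊢
  tauto

theorem Subsemigroup.inv_mem_closure {s : Set G} (hs : ∀ x ∈ s, x⁻¹ ∈ closure s) {x : G}
    (hx : x ∈ closure s) : x⁻¹ ∈ closure s := by
  induction hx using closure_induction with
  | mem y hy => exact hs y hy
  | mul a b _ _ ha hb => simpa only [mul_inv_rev] using (closure s).mul_mem hb ha

theorem isGroupSubsemigroup_of_one_mem_of_inv_mem {S : Subsemigroup G} (h1 : (1 : G) ∈ S)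
    (hinv : ∀ x ∈ S, x⁻¹ ∈ S) : IsGroupSubsemigroup S :=
  ⟨1, h1, fun x _ => ⟨one_mul x, mul_one x⟩,
    fun x hx => ⟨x⁻¹, hinv x hx, mul_inv_cancel x, inv_mul_cancel x⟩⟩

end Group

/-- Let `X` be a finite subset of a group `G` whose elements admit a nonempty product
equal to `1`, and let `Y` be the set of all elements of `X` appearing in such a product.
Then the subsemigroup of `G` generated by `Y` is a group. -/
theorem closure_of_elements_in_unit_products_is_group {G : Type*} [Group G] (X : Finset G)
    (hex : ∃ l : List G, l ≠ [] ∧ (∀ g ∈ l, g ∈ X) ∧ l.prod = 1) :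
    IsGroupSubsemigroup (Subsemigroup.closure
      {x : G | x ∈ X ∧ ∃ l : List G, l ≠ [] ∧ (∀ g ∈ l, g ∈ X) ∧ l.prod = 1 ∧ x ∈ l}) := by
  set Y := {x : G | x ∈ X ∧ ∃ l : List G, l ≠ [] ∧ (∀ g ∈ l, g ∈ X) ∧ l.prod = 1 ∧ x ∈ l}
  have letters_mem : ∀ l : List G, l ≠ [] → (∀ g ∈ l, g ∈ X) → l.prod = 1 →
      ∀ g ∈ l, g ∈ Subsemigroup.closure Y :=
    fun l hne hX hprod g hg => Subsemigroup.subset_closure ⟨hX g hg, l, hne, hX, hprod, hg⟩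
  obtain ⟨l, hne, hX, hprod⟩ := hex
  refine isGroupSubsemigroup_of_one_mem_of_inv_mem ?_ fun _ => Subsemigroup.inv_mem_closure ?_
  · exact hprod ▸ (Subsemigroup.closure Y).list_prod_mem hne (letters_mem l hne hX hprod)
  · rintro y ⟨-, l, hne, hX, hprod, hy⟩
    exact (Subsemigroup.closure Y).inv_mem_of_mem_of_prod_eq_one
      (letters_mem l hne hX hprod) hprod hy
end

section
/- The quaternions q_a = 3/5 + (4/5)i and q_b = 3/5 + (4/5)j generate a free group of rank 2 in the group of unit quaternions; equivalently, the homomorphism from the free group on {a,b} to the unit quaternions sending a ↦ q_a and b ↦ q_b is injective. -/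
/-- The quaternion `q_a = 3/5 + (4/5)i` as a unit quaternion (a point of the unit
`3`-sphere in `ℍ`, which is a group under quaternion multiplication). -/
noncomputable def qa : Metric.sphere (0 : Quaternion ℝ) 1 :=
  ⟨⟨3/5, 4/5, 0, 0⟩, by
    apply mem_sphere_zero_iff_norm.mpr
    have h2 : ∀ q : Quaternion ℝ, Quaternion.normSq q = 1 → ‖q‖ = 1 := by
      intro q hq
      have h3 := Quaternion.normSq_eq_norm_mul_self q
      rw [hq] at h3
      nlinarith [norm_nonneg q]
    apply h2
    refine (Quaternion.normSq_def' _).trans ?_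
    norm_num⟩

/-- The quaternion `q_b = 3/5 + (4/5)j` as a unit quaternion. -/
noncomputable def qb : Metric.sphere (0 : Quaternion ℝ) 1 :=
  ⟨⟨3/5, 0, 4/5, 0⟩, by
    apply mem_sphere_zero_iff_norm.mpr
    have h2 : ∀ q : Quaternion ℝ, Quaternion.normSq q = 1 → ‖q‖ = 1 := by
      intro q hq
      have h3 := Quaternion.normSq_eq_norm_mul_self q
      rw [hq] at h3
      nlinarith [norm_nonneg q]
    apply h2
    refine (Quaternion.normSq_def' _).trans ?_
    norm_num⟩

/-!
Multiplying by `5`, the letters `q_a^{±1}, q_b^{±1}` become the integer quaternions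
`3 ± 4i, 3 ± 4j`. If a reduced word of length `n ≥ 1` evaluated to `1`, the product of its
integer letters would be `5 ^ n`, hence `0` modulo `5`. But modulo `5` each letter has norm
`25 = 0`, so it is a rank-one element of `ℍ[𝔽₅] ≅ M₂(𝔽₅)`, and two consecutive letters that
do not cancel never annihilate each other: the product of a reduced word is nonzero mod `5`.
-/

open Quaternion Metric

namespace Quaternion

variable {S R : Type*} [CommRing S] [CommRing R]

def map (f : S →+* R) : ℍ[S] →+* ℍ[R] where
  toFun q := ⟨f q.re, f q.imI, f q.imJ, f q.imK⟩
  map_one' := by ext <;> simp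
  map_mul' p q := by
    -- the anonymous constructor lands in `ℍ[R,-1,0,-1]`, where the `ℍ[R]` product formulas
    -- do not fire as simp lemmas, so they are closed by unification
    ext <;> simp only [re_mul, imI_mul, imJ_mul, imK_mul, map_add, map_sub, map_mul] <;> symm
    exacts [re_mul (R := R) _ _, imI_mul (R := R) _ _, imJ_mul (R := R) _ _, imK_mul (R := R) _ _]
  map_zero' := by ext <;> simp
  map_add' _ _ := by ext <;> simp <;> rfl

section map

variable (f : S →+* R) (q : ℍ[S])

@[simp] theorem re_map : (map f q).re = f q.re := rfl
@[simp] theorem imI_map : (map f q).imI = f q.imI := rfl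
@[simp] theorem imJ_map : (map f q).imJ = f q.imJ := rfl
@[simp] theorem imK_map : (map f q).imK = f q.imK := rfl

end map

theorem map_injective {f : S →+* R} (hf : Function.Injective f) : Function.Injective (map f) :=
  fun p q hpq => by
    ext <;> apply hf <;> simp only [← re_map, ← imI_map, ← imJ_map, ← imK_map, hpq]

instance [DecidableEq R] : DecidableEq ℍ[R] := fun _ _ =>
  decidable_of_iff _ Quaternion.ext_iff.symm

end Quaternion

theorem List.prod_map_cons_ne_zero_of_isChain {α M : Type*} [MonoidWithZero M]
    {r : α → α → Prop} {e : α → M} (he : ∀ a, e a ≠ 0)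
    (hr : ∀ a b, r a b → ∀ y, e b * y ≠ 0 → e a * (e b * y) ≠ 0) :
    ∀ (a : α) (L : List α), (a :: L).IsChain r → ((a :: L).map e).prod ≠ 0
  | a, [], _ => by simpa using he a
  | a, b :: L, h => by
    rw [List.isChain_cons_cons] at h
    simpa using hr a b h.1 _ (by simpa using prod_map_cons_ne_zero_of_isChain he hr b L h.2)

/-- `letter R (x, b)` is `5 • q_x ^ (±1)`, with `x = true` standing for `a` and `b = true` for the
exponent `+1`, as in the words `FreeGroup.toWord`. -/
def letter (R : Type*) [CommRing R] : Bool × Bool → ℍ[R]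
  | (true, true) => ⟨3, 4, 0, 0⟩
  | (true, false) => ⟨3, -4, 0, 0⟩
  | (false, true) => ⟨3, 0, 4, 0⟩
  | (false, false) => ⟨3, 0, -4, 0⟩

section letter

variable (R : Type*) [CommRing R]

@[simp] theorem re_letter (l : Bool × Bool) : (letter R l).re = 3 := by
  rcases l with ⟨_ | _, _ | _⟩ <;> rfl

@[simp] theorem imI_letter (x b : Bool) :
    (letter R (x, b)).imI = if x then (if b then 4 else -4) else 0 := by
  cases x <;> cases b <;> rfl

@[simp] theorem imJ_letter (x b : Bool) :
    (letter R (x, b)).imJ = if x then 0 else (if b then 4 else -4) := by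
  cases x <;> cases b <;> rfl

@[simp] theorem imK_letter (l : Bool × Bool) : (letter R l).imK = 0 := by
  rcases l with ⟨_ | _, _ | _⟩ <;> rfl

theorem map_letter (l : Bool × Bool) : map (Int.castRingHom R) (letter ℤ l) = letter R l := by
  rcases l with ⟨_ | _, _ | _⟩ <;> ext <;> simp

end letter

theorem letter_ne_zero (l : Bool × Bool) : letter (ZMod 5) l ≠ 0 := by
  revert l
  decide

/-- Modulo `5`, the right ideal `letter b · ℍ` meets the right annihilator of `letter a`
only in `0` unless `a = b⁻¹`. -/
theorem letter_mul_letter_mul_ne_zero (a b : Bool × Bool) (hab : a.1 = b.1 → a.2 = b.2)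
    (y : ℍ[ZMod 5]) (hy : letter (ZMod 5) b * y ≠ 0) :
    letter (ZMod 5) a * (letter (ZMod 5) b * y) ≠ 0 := by
  obtain ⟨y₀, y₁, y₂, y₃⟩ := y
  revert a b y₀ y₁ y₂ y₃
  decide +kernel

theorem prod_letter_ne_zero_of_isReduced (a : Bool × Bool) (L : List (Bool × Bool))
    (h : FreeGroup.IsReduced (a :: L)) : ((a :: L).map (letter (ZMod 5))).prod ≠ 0 :=
  List.prod_map_cons_ne_zero_of_isChain letter_ne_zero letter_mul_letter_mul_ne_zero a L h

noncomputable def generator (l : Bool × Bool) : sphere (0 : ℍ[ℝ]) 1 :=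
  cond l.2 (if l.1 then qa else qb) (if l.1 then qa else qb)⁻¹

theorem coe_qa : (qa : ℍ[ℝ]) = (5 : ℝ)⁻¹ • letter ℝ (true, true) := by
  ext <;> simp [qa] <;> norm_num

theorem coe_qb : (qb : ℍ[ℝ]) = (5 : ℝ)⁻¹ • letter ℝ (false, true) := by
  ext <;> simp [qb] <;> norm_num

theorem inv_smul_letter (x b : Bool) :
    ((5 : ℝ)⁻¹ • letter ℝ (x, b))⁻¹ = (5 : ℝ)⁻¹ • letter ℝ (x, !b) := by
  refine inv_eq_of_mul_eq_one_right ?_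
  cases x <;> cases b <;> ext <;> simp <;> norm_num

theorem coe_generator (l : Bool × Bool) : (generator l : ℍ[ℝ]) = (5 : ℝ)⁻¹ • letter ℝ l := by
  rcases l with ⟨_ | _, _ | _⟩
  · simpa [generator, unitSphere.coe_inv, coe_qb] using inv_smul_letter false true
  · simp [generator, coe_qb]
  · simpa [generator, unitSphere.coe_inv, coe_qa] using inv_smul_letter true true
  · simp [generator, coe_qa]

theorem smul_coe_prod_generator (L : List (Bool × Bool)) :
    (5 : ℝ) ^ L.length • ((L.map generator).prod : ℍ[ℝ]) =
      map (Int.castRingHom ℝ) (L.map (letter ℤ)).prod := by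
  induction L with
  | nil => simp
  | cons a L ih =>
    rw [List.map_cons, List.prod_cons, unitSphere.coe_mul, List.length_cons, pow_succ',
      ← smul_smul, ← mul_smul_comm, ih, ← smul_mul_assoc, coe_generator,
      smul_inv_smul₀ (by norm_num), List.map_cons, List.prod_cons, map_mul, map_letter]

theorem prod_generator_ne_one_of_isReduced (a : Bool × Bool) (L : List (Bool × Bool))
    (h : FreeGroup.IsReduced (a :: L)) : ((a :: L).map generator).prod ≠ 1 := by
  intro hprod
  have hprod_int : ((a :: L).map (letter ℤ)).prod = 5 ^ (a :: L).length := by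
    refine map_injective (Int.castRingHom ℝ).injective_int ?_
    rw [← smul_coe_prod_generator, hprod, unitSphere.coe_one, map_pow, map_ofNat,
      ← Algebra.algebraMap_eq_smul_one, map_pow, map_ofNat]
  have hmod : ((a :: L).map (letter (ZMod 5))).prod = 0 := by
    have hfive : (5 : ℍ[ZMod 5]) = 0 := by ext <;> simp <;> decide
    rw [show (a :: L).map (letter (ZMod 5)) =
        ((a :: L).map (letter ℤ)).map (map (Int.castRingHom (ZMod 5))) by simp [map_letter],
      ← map_list_prod, hprod_int, map_pow, map_ofNat, hfive, zero_pow (by simp)]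
  exact prod_letter_ne_zero_of_isReduced a L h hmod

/-- The quaternions `q_a = 3/5 + (4/5)i` and `q_b = 3/5 + (4/5)j` generate a free group of
rank 2 in the group of unit quaternions: the homomorphism from the free group on `{a,b}`
(modelled as `FreeGroup Bool`) to the unit quaternions sending `a ↦ q_a`, `b ↦ q_b`
is injective. -/
theorem quaternions_generate_free_group :
    Function.Injective
      ((FreeGroup.lift fun x : Bool => if x then qa else qb) :
        FreeGroup Bool →* Metric.sphere (0 : Quaternion ℝ) 1) := by
  refine (injective_iff_map_eq_one _).2 fun w hw => ?_
  by_contra hw1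
  obtain ⟨a, L, hword⟩ := List.exists_cons_of_ne_nil (mt FreeGroup.toWord_eq_nil_iff.mp hw1)
  refine prod_generator_ne_one_of_isReduced a L (hword ▸ FreeGroup.isReduced_toWord) ?_
  rw [← hw, ← FreeGroup.mk_toWord (x := w), FreeGroup.lift_mk, hword]
  rfl
end

section
/- Let ρ: F → SL(2,ℤ) be an injective homomorphism from the free group F on {a,b}. For pairs (w_1, w_2) ∈ F × F, define A_{(w_1,w_2)} = ρ(w_1) ⊕ ρ(w_2), a 4×4 block-diagonal matrix. Then for a finite set W ⊆ F × F, the 4×4 identity matrix lies in the semigroup generated by {A_w : w ∈ W} if and only if (ε, ε) lies in the subsemigroup of F × F generated by W. -/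
/-- The 4×4 block-diagonal integer matrix `ρ(w₁) ⊕ ρ(w₂)` built from a pair of
free-group words `(w₁, w₂)` via a homomorphism `ρ` into `SL(2,ℤ)`. -/
def blockMat (ρ : FreeGroup Bool →* Matrix.SpecialLinearGroup (Fin 2) ℤ)
    (w : FreeGroup Bool × FreeGroup Bool) : Matrix (Fin 4) (Fin 4) ℤ :=
  Matrix.reindex finSumFinEquiv finSumFinEquiv
    (Matrix.fromBlocks (ρ w.1 : Matrix (Fin 2) (Fin 2) ℤ) 0 0
      (ρ w.2 : Matrix (Fin 2) (Fin 2) ℤ))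

/-! The map `(w₁, w₂) ↦ ρ w₁ ⊕ ρ w₂` is a monoid homomorphism `F × F →* M₄(ℤ)`, injective when `ρ` is,
and an injective multiplicative map identifies the subsemigroup generated by `W` with the one
generated by its image, sending `(ε, ε)` to the identity matrix. -/

theorem Subsemigroup.map_mem_closure_image_iff {M N : Type*} [Mul M] [Mul N] {f : M →ₙ* N}
    (hf : Function.Injective f) {s : Set M} {x : M} :
    f x ∈ closure (f '' s) ↔ x ∈ closure s := by
  rw [← MulHom.map_mclosure, mem_map_iff_mem hf]

namespace Matrix

variable (m n α : Type*) [Fintype m] [Fintype n] [DecidableEq m] [DecidableEq n]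
  [NonAssocSemiring α]

def fromBlocksDiagonalHom : Matrix m m α × Matrix n n α →* Matrix (m ⊕ n) (m ⊕ n) α where
  toFun A := fromBlocks A.1 0 0 A.2
  map_one' := fromBlocks_one
  map_mul' A B := by simp [fromBlocks_multiply]

variable {m n α}

theorem fromBlocksDiagonalHom_injective : Function.Injective (fromBlocksDiagonalHom m n α) :=
  fun _ _ h => by
    obtain ⟨h₁, -, -, h₂⟩ := fromBlocks_inj.mp h
    exact Prod.ext h₁ h₂

end Matrix

open Matrix in
def blockMatHom (ρ : FreeGroup Bool →* SpecialLinearGroup (Fin 2) ℤ) :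
    FreeGroup Bool × FreeGroup Bool →* Matrix (Fin 4) (Fin 4) ℤ :=
  (reindexRingEquiv ℤ finSumFinEquiv).toMonoidHom.comp <|
    (fromBlocksDiagonalHom (Fin 2) (Fin 2) ℤ).comp <|
      (SpecialLinearGroup.coeMonoidHom.comp ρ).prodMap (SpecialLinearGroup.coeMonoidHom.comp ρ)

theorem coe_blockMatHom (ρ : FreeGroup Bool →* Matrix.SpecialLinearGroup (Fin 2) ℤ) :
    ⇑(blockMatHom ρ) = blockMat ρ :=
  rfl

open Matrix in
theorem blockMatHom_injective {ρ : FreeGroup Bool →* SpecialLinearGroup (Fin 2) ℤ}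
    (hρ : Function.Injective ρ) : Function.Injective (blockMatHom ρ) :=
  have hcoe : Function.Injective (SpecialLinearGroup.coeMonoidHom.comp ρ) :=
    SpecialLinearGroup.coeMonoidHom_injective.comp hρ
  (reindexRingEquiv ℤ finSumFinEquiv).injective.comp <|
    fromBlocksDiagonalHom_injective.comp (hcoe.prodMap hcoe)

/-- Let `ρ` be an injective homomorphism from the free group `F` on `{a,b}` into
`SL(2,ℤ)`, and for pairs `(w₁,w₂) ∈ F × F` let `A_{(w₁,w₂)} = ρ(w₁) ⊕ ρ(w₂)` be the
4×4 block-diagonal matrix. Then for a finite set `W ⊆ F × F`, the 4×4 identity matrix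
lies in the (multiplicative) semigroup generated by `{A_w : w ∈ W}` if and only if the
identity pair `(ε, ε)` lies in the subsemigroup of `F × F` generated by `W`. -/
theorem identity_matrix_mem_iff_identity_pair_mem
    (ρ : FreeGroup Bool →* Matrix.SpecialLinearGroup (Fin 2) ℤ)
    (hρ : Function.Injective ρ)
    (W : Finset (FreeGroup Bool × FreeGroup Bool)) :
    (1 : Matrix (Fin 4) (Fin 4) ℤ) ∈
        Subsemigroup.closure (blockMat ρ '' (W : Set (FreeGroup Bool × FreeGroup Bool))) ↔
      ((1 : FreeGroup Bool), (1 : FreeGroup Bool)) ∈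
        Subsemigroup.closure (W : Set (FreeGroup Bool × FreeGroup Bool)) := by
  rw [← coe_blockMatHom, ← map_one (blockMatHom ρ)]
  exact Subsemigroup.map_mem_closure_image_iff (f := (blockMatHom ρ).toMulHom)
    (blockMatHom_injective hρ)
end

section
/- Let F be the free group on a,b and define the homomorphism ρ into GL(2,ℤ) by ρ(a) = [[1,2],[0,1]] and ρ(b) = [[1,0],[2,1]]. Then for any word w in F, ρ(w) = I₂ implies w = ε. -/
/-- The matrix `[[1,2],[0,1]]` as an element of `GL(2,ℤ)`. -/
def glA : GL (Fin 2) ℤ :=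
  ⟨!![1, 2; 0, 1], !![1, -2; 0, 1], by decide, by decide⟩

/-- The matrix `[[1,0],[2,1]]` as an element of `GL(2,ℤ)`. -/
def glB : GL (Fin 2) ℤ :=
  ⟨!![1, 0; 2, 1], !![1, 0; -2, 1], by decide, by decide⟩

/-- Nonzero integer vectors. -/
abbrev PPV : Type := {v : Fin 2 → ℤ // v ≠ 0}

noncomputable instance : MulAction (GL (Fin 2) ℤ) PPV where
  smul g v := ⟨(g : Matrix (Fin 2) (Fin 2) ℤ).mulVec v.1, by
    intro hv
    apply v.2
    have : (g⁻¹ : GL (Fin 2) ℤ).1.mulVec ((g : Matrix (Fin 2) (Fin 2) ℤ).mulVec v.1) = 0 := by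
      rw [hv, Matrix.mulVec_zero]
    rwa [Matrix.mulVec_mulVec, ← Units.val_mul, inv_mul_cancel, Units.val_one,
      Matrix.one_mulVec] at this⟩
  one_smul v := by
    apply Subtype.ext
    show (1 : GL (Fin 2) ℤ).1.mulVec v.1 = v.1
    rw [Units.val_one, Matrix.one_mulVec]
  mul_smul g h v := by
    apply Subtype.ext
    show ((g * h : GL (Fin 2) ℤ)).1.mulVec v.1 = _
    rw [Units.val_mul, ← Matrix.mulVec_mulVec]
    rfl

theorem ppv_smul_def (g : GL (Fin 2) ℤ) (v : PPV) :
    (g • v).1 = (g : Matrix (Fin 2) (Fin 2) ℤ).mulVec v.1 := rfl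

theorem ppv_ne (v : PPV) : v.1 0 ≠ 0 ∨ v.1 1 ≠ 0 := by
  by_contra hc
  push_neg at hc
  apply v.2
  funext i
  fin_cases i
  · exact hc.1
  · exact hc.2

theorem mulVec_apply (M : Matrix (Fin 2) (Fin 2) ℤ) (v : Fin 2 → ℤ) (i : Fin 2) :
    M.mulVec v i = M i 0 * v 0 + M i 1 * v 1 := by
  simp [Matrix.mulVec, dotProduct, Fin.sum_univ_two]

/-- The two generators. -/
def ppgen : Bool → GL (Fin 2) ℤ := fun x => if x then glA else glB

theorem ppgen_t : ppgen true = glA := rfl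
theorem ppgen_f : ppgen false = glB := rfl

/-- Ping-pong sets X. -/
def ppX : Bool → Set PPV
  | true => {v | v.1 1 = 0 ∨ v.1 1 * v.1 1 ≤ v.1 0 * v.1 1}
  | false => {v | v.1 0 = 0 ∨ v.1 0 * v.1 0 < v.1 0 * v.1 1}

/-- Ping-pong sets Y. -/
def ppY : Bool → Set PPV
  | true => {v | v.1 0 * v.1 1 < -(v.1 1 * v.1 1)}
  | false => {v | v.1 0 * v.1 1 ≤ -(v.1 0 * v.1 0) ∧ v.1 0 ≠ 0}

theorem dXX : Disjoint (ppX true) (ppX false) := by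
  rw [Set.disjoint_left]
  rintro v hv1 hv2
  simp only [ppX, Set.mem_setOf_eq] at hv1 hv2
  rcases hv1 with h1 | h1 <;> rcases hv2 with h2 | h2
  · exact (ppv_ne v).elim (fun h => h h2) (fun h => h h1)
  · rw [h1, mul_zero] at h2
    nlinarith [mul_self_nonneg (v.1 0)]
  · rw [h2, zero_mul] at h1
    have hy : v.1 1 = 0 := by nlinarith [mul_self_nonneg (v.1 1)]
    exact (ppv_ne v).elim (fun h => h h2) (fun h => h hy)
  · nlinarith [sq_nonneg (v.1 0 - v.1 1)]

theorem dYY : Disjoint (ppY true) (ppY false) := by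
  rw [Set.disjoint_left]
  rintro v hv1 hv2
  simp only [ppY, Set.mem_setOf_eq] at hv1 hv2
  nlinarith [sq_nonneg (v.1 0 + v.1 1), hv2.1]

theorem dXtYt : Disjoint (ppX true) (ppY true) := by
  rw [Set.disjoint_left]
  rintro v hv1 hv2
  simp only [ppX, ppY, Set.mem_setOf_eq] at hv1 hv2
  rcases hv1 with h1 | h1
  · rw [h1, mul_zero] at hv2
    linarith
  · linarith [mul_self_nonneg (v.1 1)]

theorem dXtYf : Disjoint (ppX true) (ppY false) := by
  rw [Set.disjoint_left]
  rintro v hv1 hv2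
  simp only [ppX, ppY, Set.mem_setOf_eq] at hv1 hv2
  have hx : 0 < v.1 0 * v.1 0 := mul_self_pos.mpr hv2.2
  rcases hv1 with h1 | h1
  · have h' : v.1 0 * v.1 1 = 0 := by rw [h1, mul_zero]
    linarith [hv2.1]
  · linarith [hv2.1, mul_self_nonneg (v.1 1)]

theorem dXfYt : Disjoint (ppX false) (ppY true) := by
  rw [Set.disjoint_left]
  rintro v hv1 hv2
  simp only [ppX, ppY, Set.mem_setOf_eq] at hv1 hv2
  rcases hv1 with h1 | h1
  · rw [h1, zero_mul] at hv2
    linarith [mul_self_nonneg (v.1 1)]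
  · linarith [mul_self_nonneg (v.1 0), mul_self_nonneg (v.1 1)]

theorem dXfYf : Disjoint (ppX false) (ppY false) := by
  rw [Set.disjoint_left]
  rintro v hv1 hv2
  simp only [ppX, ppY, Set.mem_setOf_eq] at hv1 hv2
  rcases hv1 with h1 | h1
  · exact hv2.2 h1
  · linarith [hv2.1, mul_self_nonneg (v.1 0)]

theorem pp_injective : Function.Injective (FreeGroup.lift ppgen) := by
  apply FreeGroup.injective_lift_of_ping_pong ppgen ppX ppY
  · -- nonempty
    intro i
    cases i
    · exact ⟨⟨![0, 1], fun h => absurd (congrFun h 1) (by norm_num)⟩, by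
        simp [ppX]⟩
    · exact ⟨⟨![1, 0], fun h => absurd (congrFun h 0) (by norm_num)⟩, by
        simp [ppX]⟩
  · -- X pairwise disjoint
    intro i j hij
    cases i <;> cases j
    · exact absurd rfl hij
    · exact dXX.symm
    · exact dXX
    · exact absurd rfl hij
  · -- Y pairwise disjoint
    intro i j hij
    cases i <;> cases j
    · exact absurd rfl hij
    · exact dYY.symm
    · exact dYY
    · exact absurd rfl hij
  · -- X i disjoint Y j
    intro i j
    cases i <;> cases j
    · exact dXfYf
    · exact dXfYt
    · exact dXtYf
    · exact dXtYt
  · -- hX : a i • (Y i)ᶜ ⊆ X i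
    intro i
    rintro w ⟨v, hv, rfl⟩
    cases i
    · -- b : (x, 2x+y)
      rw [ppgen_f]
      simp only [ppY, Set.mem_compl_iff, Set.mem_setOf_eq, not_and, not_le] at hv
      simp only [ppX, Set.mem_setOf_eq]
      rw [ppv_smul_def, mulVec_apply, mulVec_apply]
      have e1 : (glB : Matrix (Fin 2) (Fin 2) ℤ) 0 0 = 1 := rfl
      have e2 : (glB : Matrix (Fin 2) (Fin 2) ℤ) 0 1 = 0 := rfl
      have e3 : (glB : Matrix (Fin 2) (Fin 2) ℤ) 1 0 = 2 := rfl
      have e4 : (glB : Matrix (Fin 2) (Fin 2) ℤ) 1 1 = 1 := rfl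
      rw [e1, e2, e3, e4]
      by_cases h0 : v.1 0 = 0
      · left; rw [h0]; ring
      · right
        rcases le_or_gt (v.1 0 * v.1 1) (-(v.1 0 * v.1 0)) with hle | hgt
        · exact absurd h0 (hv hle)
        · nlinarith [mul_self_pos.mpr h0]
    · -- a : (x+2y, y)
      rw [ppgen_t]
      simp only [ppY, Set.mem_compl_iff, Set.mem_setOf_eq, not_lt] at hv
      simp only [ppX, Set.mem_setOf_eq]
      rw [ppv_smul_def, mulVec_apply, mulVec_apply]
      have e1 : (glA : Matrix (Fin 2) (Fin 2) ℤ) 0 0 = 1 := rfl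
      have e2 : (glA : Matrix (Fin 2) (Fin 2) ℤ) 0 1 = 2 := rfl
      have e3 : (glA : Matrix (Fin 2) (Fin 2) ℤ) 1 0 = 0 := rfl
      have e4 : (glA : Matrix (Fin 2) (Fin 2) ℤ) 1 1 = 1 := rfl
      rw [e1, e2, e3, e4]
      by_cases h1 : v.1 1 = 0
      · left; rw [h1]; ring
      · right; nlinarith [mul_self_pos.mpr h1]
  · -- hY : (a i)⁻¹ • (X i)ᶜ ⊆ Y i
    intro i
    rintro w ⟨v, hv, rfl⟩
    cases i
    · -- b⁻¹ : (x, y-2x)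
      rw [Pi.inv_apply, ppgen_f]
      simp only [ppX, Set.mem_compl_iff, Set.mem_setOf_eq, not_or, not_lt] at hv
      simp only [ppY, Set.mem_setOf_eq]
      rw [ppv_smul_def, mulVec_apply, mulVec_apply]
      have e1 : ((glB⁻¹ : GL (Fin 2) ℤ) : Matrix (Fin 2) (Fin 2) ℤ) 0 0 = 1 := rfl
      have e2 : ((glB⁻¹ : GL (Fin 2) ℤ) : Matrix (Fin 2) (Fin 2) ℤ) 0 1 = 0 := rfl
      have e3 : ((glB⁻¹ : GL (Fin 2) ℤ) : Matrix (Fin 2) (Fin 2) ℤ) 1 0 = -2 := rfl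
      have e4 : ((glB⁻¹ : GL (Fin 2) ℤ) : Matrix (Fin 2) (Fin 2) ℤ) 1 1 = 1 := rfl
      rw [e1, e2, e3, e4]
      obtain ⟨h0, h1⟩ := hv
      constructor
      · nlinarith
      · simpa using h0
    · -- a⁻¹ : (x-2y, y)
      rw [Pi.inv_apply, ppgen_t]
      simp only [ppX, Set.mem_compl_iff, Set.mem_setOf_eq, not_or, not_le] at hv
      simp only [ppY, Set.mem_setOf_eq]
      rw [ppv_smul_def, mulVec_apply, mulVec_apply]
      have e1 : ((glA⁻¹ : GL (Fin 2) ℤ) : Matrix (Fin 2) (Fin 2) ℤ) 0 0 = 1 := rfl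
      have e2 : ((glA⁻¹ : GL (Fin 2) ℤ) : Matrix (Fin 2) (Fin 2) ℤ) 0 1 = -2 := rfl
      have e3 : ((glA⁻¹ : GL (Fin 2) ℤ) : Matrix (Fin 2) (Fin 2) ℤ) 1 0 = 0 := rfl
      have e4 : ((glA⁻¹ : GL (Fin 2) ℤ) : Matrix (Fin 2) (Fin 2) ℤ) 1 1 = 1 := rfl
      rw [e1, e2, e3, e4]
      obtain ⟨h0, h1⟩ := hv
      nlinarith [mul_self_pos.mpr h0, mul_self_nonneg (v.1 1)]

/-- Let `F` be the free group on `a, b` (modelled as `FreeGroup Bool`) and let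
`ρ : F → GL(2,ℤ)` be the homomorphism with `ρ(a) = [[1,2],[0,1]]` and
`ρ(b) = [[1,0],[2,1]]`. Then for any word `w ∈ F`, `ρ(w) = I₂` implies `w = ε`. -/
theorem rho_eq_identity_implies_trivial_word (w : FreeGroup Bool)
    (h : (((FreeGroup.lift fun x : Bool => if x then glA else glB) :
        FreeGroup Bool →* GL (Fin 2) ℤ) w : Matrix (Fin 2) (Fin 2) ℤ) =
      (1 : Matrix (Fin 2) (Fin 2) ℤ)) :
    w = 1 := by
  have hlift : (FreeGroup.lift ppgen) w = 1 := by
    apply Units.ext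
    exact h
  exact pp_injective (by rw [map_one]; exact hlift)
end

section
/- For the map sending each pair of words (w_1, w_2) over a free group F to the 4×4 matrix ρ(w_1) ⊕ ρ(w_2) with ρ injective into SL(2,ℤ): the image semigroup contains a diagonal matrix if and only if it contains the 4×4 identity matrix. -/
namespace Matrix

variable {n : Type*} [Fintype n] [DecidableEq n]

theorem det_eq_one_of_mem_subsemigroupClosure {R : Type*} [CommRing R]
    {s : Set (Matrix n n R)} (hs : ∀ A ∈ s, A.det = 1) {D : Matrix n n R}
    (hD : D ∈ Subsemigroup.closure s) : D.det = 1 :=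
  (Subsemigroup.closure_le
    (S := (MonoidHom.mker (detMonoidHom : Matrix n n R →* R)).toSubsemigroup)).mpr hs hD

theorem IsDiag.mul_self_eq_one_of_det_eq_one {D : Matrix n n ℤ} (hD : D.IsDiag)
    (hdet : D.det = 1) : D * D = 1 := by
  rw [isDiag_iff_diagonal_diag] at hD
  rw [← hD, det_diagonal] at hdet
  rw [← hD, diagonal_mul_diagonal, ← diagonal_one]
  congr 1
  funext i
  have hunit : IsUnit (D.diag i) :=
    isUnit_of_dvd_one (hdet ▸ Finset.dvd_prod_of_mem _ (Finset.mem_univ i))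
  exact Int.isUnit_mul_self hunit

end Matrix

theorem det_blockMat (ρ : FreeGroup Bool →* Matrix.SpecialLinearGroup (Fin 2) ℤ)
    (w : FreeGroup Bool × FreeGroup Bool) : (blockMat ρ w).det = 1 := by
  simp [blockMat, Matrix.det_fromBlocks_zero₂₁]

theorem diagonal_mem_iff_identity_mem_general
    (ρ : FreeGroup Bool →* Matrix.SpecialLinearGroup (Fin 2) ℤ)
    (W : Finset (FreeGroup Bool × FreeGroup Bool)) :
    (∃ D ∈ Subsemigroup.closure
        (blockMat ρ '' (W : Set (FreeGroup Bool × FreeGroup Bool))), Matrix.IsDiag D) ↔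
      (1 : Matrix (Fin 4) (Fin 4) ℤ) ∈
        Subsemigroup.closure (blockMat ρ '' (W : Set (FreeGroup Bool × FreeGroup Bool))) := by
  constructor
  · rintro ⟨D, hD, hdiag⟩
    have hdet : D.det = 1 :=
      Matrix.det_eq_one_of_mem_subsemigroupClosure
        (by rintro _ ⟨w, -, rfl⟩; exact det_blockMat ρ w) hD
    simpa [hdiag.mul_self_eq_one_of_det_eq_one hdet] using mul_mem hD hD
  · exact fun h => ⟨1, h, Matrix.isDiag_one⟩

/-- For the map sending each pair of words `(w₁, w₂)` over the free group `F` on `{a,b}`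
to the 4×4 matrix `ρ(w₁) ⊕ ρ(w₂)`, with `ρ` an injective homomorphism into `SL(2,ℤ)`:
the semigroup generated by the image of a finite set `W ⊆ F × F` contains a diagonal
matrix if and only if it contains the 4×4 identity matrix. -/
theorem diagonal_mem_iff_identity_mem
    (ρ : FreeGroup Bool →* Matrix.SpecialLinearGroup (Fin 2) ℤ)
    (hρ : Function.Injective ρ)
    (W : Finset (FreeGroup Bool × FreeGroup Bool)) :
    (∃ D ∈ Subsemigroup.closure
        (blockMat ρ '' (W : Set (FreeGroup Bool × FreeGroup Bool))), Matrix.IsDiag D) ↔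
      (1 : Matrix (Fin 4) (Fin 4) ℤ) ∈
        Subsemigroup.closure (blockMat ρ '' (W : Set (FreeGroup Bool × FreeGroup Bool))) :=
  diagonal_mem_iff_identity_mem_general ρ W
end
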